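/- Contrapositive of the linkage theorem: if no nonzero Walsh coefficient of f has both the g-th and h-th mask bits set to 1, then ω_{g,h}(x) = 0 for every x ∈ B^N; equivalently f(x⊕(1_h+1_g)) + f(x) = f(x⊕1_h) + f(x⊕1_g) for all x. -/
import Mathlib


open Finset

def flipBit {N : ℕ} (x : Fin N → Bool) (g : Fin N) : Fin N → Bool :=
  Function.update x g (!x g)

def psi {N : ℕ} (i x : Fin N → Bool) : ℝ :=
  (-1 : ℝ) ^ (∑ j : Fin N, (i j && x j).toNat)

def delta {N : ℕ} (f : (Fin N → Bool) → ℝ) (g : Fin N) (x : Fin N → Bool) : ℝ :=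
  f (flipBit x g) - f x

def omega {N : ℕ} (f : (Fin N → Bool) → ℝ) (g h : Fin N) (x : Fin N → Bool) : ℝ :=
  |delta f g (flipBit x h) - delta f g x|

lemma psi_flip {N : ℕ} (i x : Fin N → Bool) (g : Fin N) :
    psi i (flipBit x g) = (if i g then -1 else 1) * psi i x := by
  unfold psi flipBit
  rw [← Finset.add_sum_erase _ _ (Finset.mem_univ g),
      ← Finset.add_sum_erase _ (fun j => (i j && x j).toNat) (Finset.mem_univ g)]
  have hrest : ∑ j ∈ univ.erase g, (i j && Function.update x g (!x g) j).toNat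
      = ∑ j ∈ univ.erase g, (i j && x j).toNat := by
    refine Finset.sum_congr rfl fun j hj => ?_
    rw [Function.update_of_ne (Finset.ne_of_mem_erase hj)]
  rw [hrest, Function.update_self]
  cases hig : i g <;> cases hxg : x g <;> simp [pow_add, pow_succ] <;> ring

theorem linkage_contrapositive {N : ℕ} (f : (Fin N → Bool) → ℝ)
    (w : (Fin N → Bool) → ℝ)
    (hw : ∀ x, f x = ∑ i : Fin N → Bool, w i * psi i x)
    (g h : Fin N) (hgh : g ≠ h)
    (hzero : ∀ i : Fin N → Bool, i g = true → i h = true → w i = 0) :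
    ∀ x : Fin N → Bool,
      |f (flipBit (flipBit x h) g) - f (flipBit x h) - f (flipBit x g) + f x| = 0 ∧
      f (flipBit (flipBit x h) g) + f x = f (flipBit x h) + f (flipBit x g) := by
  intro x
  have key : f (flipBit (flipBit x h) g) - f (flipBit x h) - f (flipBit x g) + f x = 0 := by
    rw [hw (flipBit (flipBit x h) g), hw (flipBit x h), hw (flipBit x g), hw x,
        ← Finset.sum_sub_distrib, ← Finset.sum_sub_distrib, ← Finset.sum_add_distrib]
    refine Finset.sum_eq_zero fun i _ => ?_
    rw [psi_flip, psi_flip, psi_flip]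
    cases hig : i g <;> cases hih : i h
    · norm_num
    · norm_num
    · norm_num
    · rw [hzero i hig hih]; norm_num
  constructor
  · rw [key, abs_zero]
  · linarith [key]
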